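/- For the Bethe tree B_{d,k} with d ≥ 3 and k ≥ 1, the graph energy equals ∑_{j=1}^{k-1} f_j·(d-1)^{k-1/2-j}, where f_j = 2·csc(π/(2j+4)) - 2·cot(π/(2j+2)) if j is odd, and f_j = 2·cot(π/(2j+4)) - 2·csc(π/(2j+2)) if j is even. -/

import Mathlib

/-!
Write `h v = k - lvl v` for the height of a vertex and `E_j = dickson 2 (d - 1) j`. For any
rooted tree, `x - A = Lᵀ D L` with `L` unit lower triangular and `D = diag g`, as soon as the
weights satisfy `g v = x - ∑ 1 / g w` over the children `w` of `v`; then `det (x - A) = ∏ g v`.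
In the Bethe tree the Dickson recursion `E_{j+2} = x E_{j+1} - (d - 1) E_j` shows that
`g v = E_{h v + 1}(x) / E_{h v}(x)` is such a solution, so `χ_A · ∏ E_{h v} = ∏ E_{h v + 1}`.
The sum of the absolute values of the roots is additive on products, there are
`(d - 1)^(k-1-j)` vertices of height `j`, and `E_j(2√(d-1) X) = √(d-1)^j U_j` has the roots
`2√(d-1) cos (iπ/(j+1))`, whose absolute values add up to `2√(d-1) (c_j - 1)` by the Dirichlet
kernel, with `c_j = cot (π/(2j+2))` for odd `j` and `csc (π/(2j+2))` for even `j`.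
-/

open Polynomial

/-- A rooted tree on the vertex set `Fin (n+1)`, encoded by a parent function:
the root is `0`, and every non-root vertex has a parent strictly smaller than
itself (which guarantees acyclicity and connectedness). -/
structure ParentTree (n : ℕ) where
  parent : Fin (n + 1) → Fin (n + 1)
  parent_lt : ∀ i : Fin (n + 1), i ≠ 0 → parent i < i
  parent_zero : parent 0 = 0

namespace ParentTree

variable {n : ℕ}

/-- The set of children of a vertex. -/
def children (T : ParentTree n) (v : Fin (n + 1)) : Finset (Fin (n + 1)) :=
  Finset.univ.filter fun w => T.parent w = v ∧ w ≠ v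

/-- The adjacency matrix of a rooted tree, with entries in `R`. -/
def adjMat (T : ParentTree n) (R : Type) [Zero R] [One R] :
    Matrix (Fin (n + 1)) (Fin (n + 1)) R :=
  Matrix.of fun i j => if i ≠ j ∧ (T.parent i = j ∨ T.parent j = i) then 1 else 0

/-- The degree of a vertex. -/
def deg (T : ParentTree n) (v : Fin (n + 1)) : ℕ :=
  (T.children v).card + if v = 0 then 0 else 1

end ParentTree

open Finset Matrix Real

lemma sum_range_cos_mul_two_sin (θ : ℝ) (m : ℕ) :
    (∑ k ∈ range m, cos ((k + 1) * θ)) * (2 * sin (θ / 2)) =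
      sin ((2 * m + 1) * θ / 2) - sin (θ / 2) := by
  induction m with
  | zero => simp
  | succ m ih =>
    rw [sum_range_succ, add_mul, ih]
    have hprod : cos ((m + 1) * θ) * (2 * sin (θ / 2)) =
        sin ((m + 1) * θ + θ / 2) - sin ((m + 1) * θ - θ / 2) := by
      rw [sin_add, sin_sub]; ring
    rw [hprod]
    push_cast
    ring_nf

lemma sum_range_abs_cos_of_two_mul_le {n m : ℕ} {θ : ℝ} (hθ : (n + 1) * θ = π)
    (hm : 2 * m ≤ n) :
    ∑ k ∈ range m, |cos ((k + 1) * θ)| = ∑ k ∈ range m, cos ((k + 1) * θ) := by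
  have hθpos : 0 < θ := by
    have : (0 : ℝ) < n + 1 := by positivity
    nlinarith [pi_pos]
  refine sum_congr rfl fun k hk => abs_of_nonneg (cos_nonneg_of_mem_Icc ⟨?_, ?_⟩)
  · nlinarith [pi_pos]
  · have : (2 * (k + 1) : ℝ) ≤ n + 1 := by
      have := mem_range.1 hk; exact_mod_cast (by omega : 2 * (k + 1) ≤ n + 1)
    nlinarith

lemma sum_range_abs_cos_reflect {n s m : ℕ} {θ : ℝ} (hθ : (n + 1) * θ = π)
    (hsm : s + m = n) :
    ∑ k ∈ range m, |cos (((s + k : ℕ) + 1) * θ)| =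
      ∑ k ∈ range m, |cos ((k + 1) * θ)| := by
  rw [← sum_range_reflect]
  refine sum_congr rfl fun k hk => ?_
  have hk := mem_range.1 hk
  have hcast : ((s + (m - 1 - k) : ℕ) + 1 : ℝ) * θ = π - ((k : ℕ) + 1) * θ := by
    rw [← hθ, ← hsm]
    push_cast [Nat.cast_sub (by omega : k ≤ m - 1), Nat.cast_sub (by omega : 1 ≤ m)]
    ring
  rw [hcast, cos_pi_sub, abs_neg]

lemma sum_range_abs_cos_pi_div (n : ℕ) :
    ∑ k ∈ range n, |cos ((k + 1) * π / (n + 1))| =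
      (if Odd n then cot (π / (2 * n + 2)) else (sin (π / (2 * n + 2)))⁻¹) - 1 := by
  set θ := π / (n + 1) with hθ
  have hnθ : (n + 1) * θ = π := by rw [hθ]; field_simp
  simp_rw [mul_div_assoc, ← hθ]
  have hhalf : π / (2 * n + 2) = θ / 2 := by rw [hθ]; field_simp
  have hsin : 0 < sin (θ / 2) :=
    sin_pos_of_pos_of_lt_pi (by positivity) (by nlinarith [pi_pos, (n.cast_nonneg : (0:ℝ) ≤ n)])
  have hdir := sum_range_cos_mul_two_sin θ (n / 2)
  rw [hhalf]
  rcases Nat.even_or_odd' n with ⟨m, hm | hm⟩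
  · rw [show n / 2 = m by omega, show (2 * m + 1 : ℝ) * θ / 2 = π / 2 by
      rw [← hnθ, hm]; push_cast; ring, sin_pi_div_two] at hdir
    rw [if_neg (Nat.not_odd_iff_even.2 ⟨m, by omega⟩), hm, two_mul, sum_range_add,
      sum_range_abs_cos_reflect hnθ (by omega), sum_range_abs_cos_of_two_mul_le hnθ (by omega),
      ← two_mul]
    field_simp
    linarith
  · rw [show n / 2 = m by omega, show (2 * m + 1 : ℝ) * θ / 2 = π / 2 - θ / 2 by
      rw [← hnθ, hm]; push_cast; ring, sin_pi_div_two_sub] at hdir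
    have hmid : cos (((m : ℕ) + 1) * θ) = 0 := by
      rw [show ((m : ℕ) + 1) * θ = π / 2 by rw [← hnθ, hm]; push_cast; ring, cos_pi_div_two]
    rw [if_pos ⟨m, hm⟩, hm, show 2 * m + 1 = (m + 1) + m by ring, sum_range_add, sum_range_succ,
      hmid, abs_zero, add_zero, sum_range_abs_cos_reflect hnθ (by omega),
      sum_range_abs_cos_of_two_mul_le hnθ (by omega), ← two_mul, cot_eq_cos_div_sin]
    field_simp
    linarith

noncomputable def absRootSum (p : ℝ[X]) : ℝ := (p.roots.map fun x => |x|).sum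

lemma absRootSum_mul {p q : ℝ[X]} (hp : p ≠ 0) (hq : q ≠ 0) :
    absRootSum (p * q) = absRootSum p + absRootSum q := by
  simp [absRootSum, roots_mul (mul_ne_zero hp hq)]

lemma absRootSum_prod {ι : Type*} (s : Finset ι) (f : ι → ℝ[X])
    (hf : ∀ i ∈ s, f i ≠ 0) :
    absRootSum (∏ i ∈ s, f i) = ∑ i ∈ s, absRootSum (f i) := by
  rw [absRootSum, roots_prod _ _ (prod_ne_zero_iff.2 hf), Multiset.map_bind, Multiset.sum_bind]
  rfl

lemma dickson_two_sq_comp_C_mul_X {R : Type*} [CommRing R] (b : R) :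
    ∀ n, (dickson 2 (b ^ 2) n).comp (C b * X) = C (b ^ n) * dickson 2 1 n
  | 0 => by simp
  | 1 => by simp
  | n + 2 => by
    simp only [dickson_add_two, sub_comp, mul_comp, X_comp, C_comp,
      dickson_two_sq_comp_C_mul_X b n, dickson_two_sq_comp_C_mul_X b (n + 1)]
    simp only [C_pow, map_one]
    ring

lemma dickson_two_sq_comp_C_two_mul_X {R : Type*} [CommRing R] (b : R) (n : ℕ) :
    (dickson 2 (b ^ 2) n).comp (C (2 * b) * X) = C (b ^ n) * Chebyshev.U R n := by
  rw [show C (2 * b) * X = (C b * X).comp (2 * X) by simp [C_mul, C_ofNat]; ring, ← comp_assoc,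
    dickson_two_sq_comp_C_mul_X, mul_comp, C_comp, ← chebyshev_U_eq_dickson_two_one]

lemma roots_dickson_two {a : ℝ} (ha : 0 < a) (n : ℕ) :
    (dickson 2 a n).roots = (Chebyshev.U ℝ n).roots.map fun y => 2 * √a * y := by
  have hb : 2 * √a ≠ 0 := by positivity
  have hcomp := dickson_two_sq_comp_C_two_mul_X (√a) n
  rw [sq_sqrt ha.le] at hcomp
  have h := roots_comp_C_mul_X_add_C (dickson 2 a n) (2 * √a) 0 (isUnit_iff_ne_zero.2 hb)
  rw [C_0, add_zero, hcomp, roots_C_mul _ (by positivity)] at h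
  rw [h, Multiset.map_map, Ring.inverse_eq_inv']
  conv_lhs => rw [← Multiset.map_id (dickson 2 a n).roots]
  congr 1
  funext x
  simp [field]

lemma absRootSum_dickson_two {a : ℝ} (ha : 0 < a) (n : ℕ) :
    absRootSum (dickson 2 a n) = 2 * √a * ∑ k ∈ range n, |cos ((k + 1) * π / (n + 1))| := by
  have hinj := (nodup_map_iff_injOn (s := range n)).1 (Chebyshev.roots_U_real_nodup n)
  rw [absRootSum, roots_dickson_two ha, Chebyshev.roots_U_real, Multiset.map_map]
  change ∑ y ∈ _, _ = _
  rw [sum_image hinj, mul_sum]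
  refine sum_congr rfl fun k _ => ?_
  rw [Function.comp_apply, abs_mul, abs_of_pos (by positivity : 0 < 2 * √a)]

lemma dickson_two_ne_zero {a : ℝ} (ha : 0 < a) (n : ℕ) : dickson 2 a n ≠ 0 := by
  intro h
  have hcomp := dickson_two_sq_comp_C_two_mul_X (√a) n
  rw [sq_sqrt ha.le, h, zero_comp] at hcomp
  exact mul_ne_zero (C_ne_zero.2 (by positivity)) (Chebyshev.U_ne_zero ℝ n (by omega)) hcomp.symm

lemma absRootSum_dickson_two_succ_sub {a : ℝ} (ha : 0 < a) (j : ℕ) :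
    absRootSum (dickson 2 a (j + 1)) - absRootSum (dickson 2 a j) =
      √a * (if Odd j then
          2 * (sin (π / (2 * j + 4)))⁻¹ - 2 * cot (π / (2 * j + 2))
        else
          2 * cot (π / (2 * j + 4)) - 2 * (sin (π / (2 * j + 2)))⁻¹) := by
  rw [absRootSum_dickson_two ha, absRootSum_dickson_two ha, sum_range_abs_cos_pi_div,
    sum_range_abs_cos_pi_div]
  simp only [Nat.odd_add_one]
  push_cast
  rw [show 2 * ((j : ℝ) + 1) + 2 = 2 * j + 4 by ring]
  split_ifs <;> ring

lemma Polynomial.eq_of_eval_eq_of_eval_ne_zero {R : Type*} [CommRing R] [IsDomain R]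
    [Infinite R] {p q r : R[X]} (hr : r ≠ 0)
    (h : ∀ x, r.eval x ≠ 0 → p.eval x = q.eval x) : p = q := by
  have hmul : (p - q) * r = 0 := Polynomial.funext fun x => by
    by_cases hx : r.eval x = 0 <;> simp [hx, h x]
  exact sub_eq_zero.1 ((mul_eq_zero.1 hmul).resolve_right hr)

namespace ParentTree

variable {n : ℕ} (T : ParentTree n) {lvl : Fin (n + 1) → ℕ}

lemma mem_children {v w : Fin (n + 1)} : w ∈ T.children v ↔ T.parent w = v ∧ w ≠ v := by
  simp [children]

lemma not_parent_eq_and_parent_eq {i j : Fin (n + 1)} (hij : i ≠ j) :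
    ¬(T.parent i = j ∧ T.parent j = i) := by
  rintro ⟨hi, hj⟩
  have hi0 : i ≠ 0 := fun h => hij (h ▸ T.parent_zero ▸ h ▸ hi)
  have hj0 : j ≠ 0 := fun h => hij (h ▸ T.parent_zero ▸ h ▸ hj).symm
  exact lt_asymm (hi ▸ T.parent_lt i hi0) (hj ▸ T.parent_lt j hj0)

def parentMat (R : Type) [Zero R] [One R] : Matrix (Fin (n + 1)) (Fin (n + 1)) R :=
  of fun i j => if T.parent i = j ∧ i ≠ j then 1 else 0

lemma adjMat_eq_parentMat_add_transpose (R : Type) [AddMonoidWithOne R] :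
    T.adjMat R = T.parentMat R + (T.parentMat R)ᵀ := by
  ext i j
  by_cases hij : i = j
  · simp [adjMat, parentMat, hij]
  · have := T.not_parent_eq_and_parent_eq hij
    by_cases hi : T.parent i = j <;> by_cases hj : T.parent j = i <;>
      simp_all [adjMat, parentMat, Ne.symm hij]

lemma one_sub_diagonal_mul_parentMat_isLowerTriangular {R : Type} [CommRing R]
    (h : Fin (n + 1) → R) :
    (1 - diagonal h * T.parentMat R).IsLowerTriangular := by
  intro i j hij
  have hij : i < j := hij
  have hpar : T.parent i ≠ j := by
    intro hp
    rcases eq_or_ne i 0 with rfl | hi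
    · exact hij.ne (T.parent_zero ▸ hp)
    · exact lt_asymm hij (hp ▸ T.parent_lt i hi)
  simp [parentMat, hij.ne, hpar]

lemma det_one_sub_diagonal_mul_parentMat {R : Type} [CommRing R] (h : Fin (n + 1) → R) :
    (1 - diagonal h * T.parentMat R).det = 1 := by
  rw [det_of_isLowerTriangular _ (T.one_sub_diagonal_mul_parentMat_isLowerTriangular h)]
  simp [parentMat]

lemma transpose_parentMat_mul_diagonal_mul_parentMat {R : Type} [CommRing R]
    (h : Fin (n + 1) → R) :
    (T.parentMat R)ᵀ * diagonal h * T.parentMat R =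
      diagonal fun v => ∑ w ∈ T.children v, h w := by
  ext i j
  rw [mul_apply]
  simp only [mul_diagonal, transpose_apply, parentMat, of_apply]
  by_cases hij : i = j
  · subst hij
    simp +contextual [children, sum_filter]
  · rw [diagonal_apply_ne _ hij]
    refine sum_eq_zero fun w _ => ?_
    by_cases hi : T.parent w = i <;> simp_all

theorem det_scalar_sub_adjMat {K : Type} [Field K] (x : K) (g : Fin (n + 1) → K)
    (hg : ∀ v, g v ≠ 0) (hrec : ∀ v, g v + ∑ w ∈ T.children v, (g w)⁻¹ = x) :
    (scalar (Fin (n + 1)) x - T.adjMat K).det = ∏ v, g v := by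
  set P := T.parentMat K
  set L := 1 - diagonal g⁻¹ * P
  have hinv : diagonal g⁻¹ * diagonal g = 1 ∧ diagonal g * diagonal g⁻¹ = 1 := by
    simp only [diagonal_mul_diagonal, ← diagonal_one]
    constructor <;> congr 1 <;> ext v <;> simp [hg v]
  have hLt : Lᵀ = 1 - Pᵀ * diagonal g⁻¹ := by
    simp [L, transpose_sub, transpose_mul]
  have hfactor : scalar (Fin (n + 1)) x - T.adjMat K = Lᵀ * diagonal g * L := by
    have hchild := T.transpose_parentMat_mul_diagonal_mul_parentMat g⁻¹
    have hscalar : scalar (Fin (n + 1)) x = diagonal g + Pᵀ * diagonal g⁻¹ * P := by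
      rw [hchild, diagonal_add, scalar_apply]
      congr 1; ext v; simp [hrec v]
    rw [hLt, T.adjMat_eq_parentMat_add_transpose, hscalar]
    simp only [L, sub_mul, mul_sub, one_mul, mul_one, Matrix.mul_assoc, hinv.1,
      ← Matrix.mul_assoc (diagonal g) (diagonal g⁻¹), hinv.2]
    abel
  rw [hfactor, det_mul, det_mul, det_transpose, T.det_one_sub_diagonal_mul_parentMat,
    det_diagonal, one_mul, mul_one]

lemma lvl_of_mem_children (hlvl : ∀ v, v ≠ 0 → lvl v = lvl (T.parent v) + 1)
    {v w : Fin (n + 1)} (hw : w ∈ T.children v) : lvl w = lvl v + 1 := by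
  obtain ⟨hpar, hne⟩ := T.mem_children.1 hw
  have hw0 : w ≠ 0 := by
    rintro rfl
    exact hne (T.parent_zero ▸ hpar)
  rw [hlvl w hw0, hpar]

lemma one_le_lvl (hlvl0 : lvl 0 = 1) (hlvl : ∀ v, v ≠ 0 → lvl v = lvl (T.parent v) + 1)
    (v : Fin (n + 1)) : 1 ≤ lvl v := by
  rcases eq_or_ne v 0 with rfl | hv
  · rw [hlvl0]
  · rw [hlvl v hv]; omega

lemma card_level (hlvl0 : lvl 0 = 1) (hlvl : ∀ v, v ≠ 0 → lvl v = lvl (T.parent v) + 1)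
    {m k : ℕ} (hbethe : ∀ v, lvl v < k → #(T.children v) = m) {l : ℕ} (hl : 1 ≤ l)
    (hlk : l ≤ k) : #{v | lvl v = l} = m ^ (l - 1) := by
  induction l, hl using Nat.le_induction with
  | base =>
    rw [Nat.sub_self, pow_zero, card_eq_one]
    refine ⟨0, eq_singleton_iff_unique_mem.2 ⟨by simp [hlvl0], fun v hv => ?_⟩⟩
    by_contra hv0
    have := T.one_le_lvl hlvl0 hlvl (T.parent v)
    simp only [mem_filter, mem_univ, true_and, hlvl v hv0] at hv
    omega
  | succ l hl ih =>
    have hmaps : ∀ w ∈ ({v | lvl v = l + 1} : Finset _),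
        T.parent w ∈ ({v | lvl v = l} : Finset _) := by
      intro w hw
      simp only [mem_filter, mem_univ, true_and] at hw ⊢
      have hw0 : w ≠ 0 := by rintro rfl; omega
      have := hlvl w hw0
      omega
    rw [card_eq_sum_card_fiberwise hmaps]
    have hfiber : ∀ v ∈ ({v | lvl v = l} : Finset _),
        #{w ∈ ({v | lvl v = l + 1} : Finset _) | T.parent w = v} = m := by
      intro v hv
      simp only [mem_filter, mem_univ, true_and] at hv
      rw [← hbethe v (by omega)]
      congr 1
      ext w
      simp only [mem_filter, mem_univ, true_and, mem_children]
      constructor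
      · rintro ⟨hw, hpar⟩
        exact ⟨hpar, fun h => by subst h; omega⟩
      · intro hw
        exact ⟨(T.lvl_of_mem_children hlvl (T.mem_children.2 hw)).trans (by omega), hw.1⟩
    rw [sum_congr rfl hfiber, sum_const, ih (by omega), smul_eq_mul, ← pow_succ,
      Nat.sub_add_cancel hl, Nat.add_sub_cancel]

lemma sum_comp_height (hlvl0 : lvl 0 = 1) (hlvl : ∀ v, v ≠ 0 → lvl v = lvl (T.parent v) + 1)
    {m k : ℕ} (hle : ∀ v, lvl v ≤ k) (hbethe : ∀ v, lvl v < k → #(T.children v) = m)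
    (F : ℕ → ℝ) :
    ∑ v, F (k - lvl v) = ∑ j ∈ range k, (m : ℝ) ^ (k - 1 - j) * F j := by
  have hmaps : ∀ v ∈ (univ : Finset (Fin (n + 1))), k - lvl v ∈ range k := fun v _ => by
    have := T.one_le_lvl hlvl0 hlvl v
    have := hle v
    rw [mem_range]; omega
  rw [← sum_fiberwise_of_maps_to hmaps]
  refine sum_congr rfl fun j hj => ?_
  have hj := mem_range.1 hj
  have hfiber : univ.filter (fun v => k - lvl v = j) = univ.filter fun v => lvl v = k - j := by
    ext v
    have := T.one_le_lvl hlvl0 hlvl v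
    have := hle v
    simp only [mem_filter, mem_univ, true_and]
    omega
  rw [sum_congr rfl fun v hv => congrArg F (mem_filter.1 hv).2, sum_const, hfiber,
    T.card_level hlvl0 hlvl hbethe (by omega) (by omega), nsmul_eq_mul, Nat.cast_pow,
    show k - j - 1 = k - 1 - j by omega]

lemma det_scalar_sub_adjMat_mul_prod_dickson (hlvl0 : lvl 0 = 1)
    (hlvl : ∀ v, v ≠ 0 → lvl v = lvl (T.parent v) + 1) {m k : ℕ} (hle : ∀ v, lvl v ≤ k)
    (hbethe : ∀ v, lvl v < k → #(T.children v) = m)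
    (hleaf : ∀ v, lvl v = k → #(T.children v) = 0) (x : ℝ)
    (hx : ∀ j ≤ k, (dickson 2 (m : ℝ) j).eval x ≠ 0) :
    (scalar (Fin (n + 1)) x - T.adjMat ℝ).det * ∏ v, (dickson 2 (m : ℝ) (k - lvl v)).eval x =
      ∏ v, (dickson 2 (m : ℝ) (k - lvl v + 1)).eval x := by
  set E : ℕ → ℝ := fun j => (dickson 2 (m : ℝ) j).eval x with hE
  have hht : ∀ v, k - lvl v + 1 ≤ k := fun v => by
    have := T.one_le_lvl hlvl0 hlvl v; have := hle v; omega
  have hg : ∀ v, E (k - lvl v + 1) / E (k - lvl v) ≠ 0 := fun v =>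
    div_ne_zero (hx _ (hht v)) (hx _ (by have := hht v; omega))
  have hrec : ∀ v, E (k - lvl v + 1) / E (k - lvl v) +
      ∑ w ∈ T.children v, (E (k - lvl w + 1) / E (k - lvl w))⁻¹ = x := by
    intro v
    rcases (hle v).lt_or_eq with hv | hv
    · obtain ⟨s, hs⟩ : ∃ s, k - lvl v = s + 1 := ⟨k - lvl v - 1, by omega⟩
      have hchild : ∀ w ∈ T.children v, k - lvl w = s := fun w hw => by
        have := T.lvl_of_mem_children hlvl hw; omega
      rw [sum_congr rfl fun w hw => by rw [hchild w hw], sum_const, hbethe v hv, hs,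
        nsmul_eq_mul]
      have hs1 : E (s + 1) ≠ 0 := hx _ (by omega)
      have hs2 : E (s + 2) = x * E (s + 1) - m * E s := by simp [hE]
      rw [inv_div, hs2]
      field_simp
      ring
    · rw [card_eq_zero.1 (hleaf v hv), hv, Nat.sub_self]
      norm_num [hE]
  rw [T.det_scalar_sub_adjMat x _ hg hrec, prod_div_distrib,
    div_mul_cancel₀ _ (prod_ne_zero_iff.2 fun v _ => hx _ (by have := hht v; omega))]

lemma charpoly_adjMat_mul_prod_dickson (hlvl0 : lvl 0 = 1)
    (hlvl : ∀ v, v ≠ 0 → lvl v = lvl (T.parent v) + 1) {m k : ℕ} (hm : 0 < m)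
    (hle : ∀ v, lvl v ≤ k) (hbethe : ∀ v, lvl v < k → #(T.children v) = m)
    (hleaf : ∀ v, lvl v = k → #(T.children v) = 0) :
    (T.adjMat ℝ).charpoly * ∏ v, dickson 2 (m : ℝ) (k - lvl v) =
      ∏ v, dickson 2 (m : ℝ) (k - lvl v + 1) := by
  have hE : ∀ j, dickson 2 (m : ℝ) j ≠ 0 := dickson_two_ne_zero (by exact_mod_cast hm)
  refine eq_of_eval_eq_of_eval_ne_zero (r := ∏ j ∈ range (k + 1), dickson 2 (m : ℝ) j)
    (prod_ne_zero_iff.2 fun j _ => hE j) fun x hx => ?_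
  rw [eval_prod, prod_ne_zero_iff] at hx
  rw [eval_mul, eval_prod, eval_prod, eval_charpoly]
  exact T.det_scalar_sub_adjMat_mul_prod_dickson hlvl0 hlvl hle hbethe hleaf x
    fun j hj => hx j (mem_range.2 (by omega))

lemma absRootSum_charpoly_adjMat (hlvl0 : lvl 0 = 1)
    (hlvl : ∀ v, v ≠ 0 → lvl v = lvl (T.parent v) + 1) {m k : ℕ} (hm : 0 < m)
    (hle : ∀ v, lvl v ≤ k) (hbethe : ∀ v, lvl v < k → #(T.children v) = m)
    (hleaf : ∀ v, lvl v = k → #(T.children v) = 0) :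
    absRootSum (T.adjMat ℝ).charpoly = ∑ v, (absRootSum (dickson 2 (m : ℝ) (k - lvl v + 1)) -
      absRootSum (dickson 2 (m : ℝ) (k - lvl v))) := by
  have hE : ∀ j, dickson 2 (m : ℝ) j ≠ 0 := dickson_two_ne_zero (by exact_mod_cast hm)
  have h := congrArg absRootSum (T.charpoly_adjMat_mul_prod_dickson hlvl0 hlvl hm hle hbethe hleaf)
  rw [absRootSum_mul (charpoly_monic _).ne_zero (prod_ne_zero_iff.2 fun v _ => hE _),
    absRootSum_prod _ _ fun v _ => hE _, absRootSum_prod _ _ fun v _ => hE _] at h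
  rw [sum_sub_distrib]
  linarith

end ParentTree

theorem stmt_14 {n : ℕ} (T : ParentTree n)
    (lvl : Fin (n + 1) → ℕ)
    (hlvl0 : lvl 0 = 1)
    (hlvl : ∀ v, v ≠ 0 → lvl v = lvl (T.parent v) + 1)
    (d k : ℕ) (hd : 3 ≤ d) (hk : 1 ≤ k)
    (hle : ∀ v, lvl v ≤ k)
    (hbethe : ∀ v, lvl v < k → (T.children v).card = d - 1)
    (hleaf : ∀ v, lvl v = k → (T.children v).card = 0) :
    (((T.adjMat ℝ).charpoly).roots.map (fun x => |x|)).sum =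
      ∑ j ∈ Finset.Icc 1 (k - 1),
        (if Odd j then
            2 * (Real.sin (Real.pi / (2 * j + 4)))⁻¹ - 2 * Real.cot (Real.pi / (2 * j + 2))
          else
            2 * Real.cot (Real.pi / (2 * j + 4)) - 2 * (Real.sin (Real.pi / (2 * j + 2)))⁻¹)
          * ((d : ℝ) - 1) ^ ((k : ℝ) - 1 / 2 - (j : ℝ)) := by
  have hm : 0 < d - 1 := by omega
  have hbase : (d : ℝ) - 1 = ((d - 1 : ℕ) : ℝ) := by
    push_cast [Nat.cast_sub (by omega : 1 ≤ d)]; ring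
  change absRootSum _ = _
  rw [T.absRootSum_charpoly_adjMat hlvl0 hlvl hm hle hbethe hleaf,
    T.sum_comp_height hlvl0 hlvl hle hbethe
      fun j => absRootSum (dickson 2 _ (j + 1)) - absRootSum (dickson 2 _ j)]
  have hzero : absRootSum (dickson 2 ((d - 1 : ℕ) : ℝ) 1) -
      absRootSum (dickson 2 ((d - 1 : ℕ) : ℝ) 0) = 0 := by
    norm_num [absRootSum]
  rw [← sum_subset (s₁ := Icc 1 (k - 1))
    (fun j hj => by simp only [mem_Icc, mem_range] at hj ⊢; omega)
    fun j hj hj' => by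
      rw [show j = 0 by simp only [mem_Icc, mem_range] at hj hj'; omega, hzero, mul_zero]]
  refine sum_congr rfl fun j hj => ?_
  have hj := mem_Icc.1 hj
  rw [absRootSum_dickson_two_succ_sub (by exact_mod_cast hm), hbase,
    show (k : ℝ) - 1 / 2 - j = ((k - 1 - j : ℕ) : ℝ) + 1 / 2 by
      push_cast [Nat.cast_sub (by omega : j ≤ k - 1), Nat.cast_sub hk]; ring,
    rpow_add (by positivity), rpow_natCast, ← sqrt_eq_rpow]
  ring
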